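/- arXiv:1209.2760 — 5 statements merged into one kernel-verified Lean document; each statement's English description precedes it below -/
import Mathlib

section
/- For any prime p and any natural number n, the Chebyshev polynomial C_{p^n} is congruent to x^{p^n} modulo p, i.e., every coefficient of C_{p^n} − x^{p^n} in ℤ[x] is divisible by p. -/
open Polynomial

/-- Normalized Chebyshev polynomial of the first kind: `C 0 = 2`, `C 1 = X`,
`C (n+2) = X * C (n+1) - C n`. -/
noncomputable def chebC : ℕ → Polynomial ℤ
  | 0 => 2
  | 1 => X
  | n + 2 => X * chebC (n + 1) - chebC n

/-- Normalized Chebyshev polynomial of the second kind: `S 0 = 0`, `S 1 = 1`,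
`S (n+2) = X * S (n+1) - S n`. -/
noncomputable def chebS : ℕ → Polynomial ℤ
  | 0 => 0
  | 1 => 1
  | n + 2 => X * chebS (n + 1) - chebS n

/-! `C_n` is the Dickson polynomial `D_n(X, 1)`, which satisfies `D_{mn} = D_m ∘ D_n` and
`D_p ≡ X^p` in characteristic `p`; iterating gives `D_{p^n} ≡ X^{p^n}`. -/

theorem chebC_eq_dickson : ∀ n : ℕ, chebC n = dickson 1 1 n
  | 0 => by norm_num [chebC, dickson_zero]
  | 1 => by rw [chebC, dickson_one]
  | n + 2 => by
      rw [chebC, dickson_add_two, chebC_eq_dickson (n + 1), chebC_eq_dickson n, map_one, one_mul]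

theorem dickson_one_one_charP_pow {R : Type*} [CommRing R] (p : ℕ) [Fact p.Prime] [CharP R p]
    (n : ℕ) : dickson 1 (1 : R) (p ^ n) = X ^ (p ^ n) := by
  induction n with
  | zero => rw [pow_zero, pow_one, dickson_one]
  | succ n ih =>
      rw [pow_succ, dickson_one_one_mul, ih, dickson_one_one_charP, X_pow_comp, ← pow_mul, mul_comm]

theorem map_chebC (R : Type*) [CommRing R] (n : ℕ) :
    (chebC n).map (Int.castRingHom R) = dickson 1 (1 : R) n := by
  rw [chebC_eq_dickson, map_dickson, map_one]

/-- For a prime `p`, every coefficient of `C_{p^n} - X^{p^n}` is divisible by `p`. -/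
theorem chebC_prime_pow_congr (p : ℕ) (hp : p.Prime) (n : ℕ) :
    ∀ k : ℕ, (p : ℤ) ∣ (chebC (p ^ n) - X ^ (p ^ n)).coeff k := by
  have : Fact p.Prime := ⟨hp⟩
  have hmod : (chebC (p ^ n) - X ^ (p ^ n)).map (Int.castRingHom (ZMod p)) = 0 := by
    rw [Polynomial.map_sub, map_chebC, dickson_one_one_charP_pow, Polynomial.map_pow, map_X,
      sub_self]
  intro k
  rw [← ZMod.intCast_zmod_eq_zero_iff_dvd, ← eq_intCast (Int.castRingHom (ZMod p)), ← coeff_map,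
    hmod, coeff_zero]
end

section
/- For any positive integer n, C_n(x) = Σ_{i ≤ n/2} (−1)^i · K(n−i, i) · x^{n−2i}, where K(n,m) = C(n,m) + C(n−1,m−1). -/
/-!
Extend the sum over `i ≤ n / 2` to `i < n`: the added terms vanish because `K(m, i) = 0` for
`0 < m < i`. With this common range the three sums in `C (n + 2) = X * C (n + 1) - C n` can be
compared term by term, and termwise the recurrence is Pascal's rule
`K(m + 2, b + 1) = K(m + 1, b + 1) + K(m + 1, b)`.
-/

open Polynomial

/-- `K(n,m) = C(n,m) + C(n−1,m−1)`, where the second term vanishes when `m = 0`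
(corresponding to the binomial coefficient with lower index `−1`). -/
def chebK (n m : ℕ) : ℕ := n.choose m + if m = 0 then 0 else (n - 1).choose (m - 1)

open Finset

lemma chebK_zero_right (n : ℕ) : chebK n 0 = 1 := by
  simp [chebK]

lemma chebK_add_two_succ (m b : ℕ) :
    chebK (m + 2) (b + 1) = chebK (m + 1) (b + 1) + chebK (m + 1) b := by
  cases b with
  | zero => simp [chebK]
  | succ b =>
    simp only [chebK, Nat.succ_ne_zero, if_false, Nat.add_one_sub_one]
    rw [Nat.choose_succ_succ' (m + 1) (b + 1), Nat.choose_succ_succ' m b]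
    ring

lemma chebK_eq_zero_of_lt {m i : ℕ} (hm : m ≠ 0) (h : m < i) : chebK m i = 0 := by
  rw [chebK, if_neg (by omega), Nat.choose_eq_zero_of_lt h, Nat.choose_eq_zero_of_lt (by omega)]

noncomputable def chebCTerm (n i : ℕ) : ℤ[X] :=
  C ((-1 : ℤ) ^ i * (chebK (n - i) i : ℤ)) * X ^ (n - 2 * i)

lemma chebCTerm_eq_zero {n i : ℕ} (h₁ : i < n) (h₂ : n < 2 * i) : chebCTerm n i = 0 := by
  simp [chebCTerm, chebK_eq_zero_of_lt (m := n - i) (i := i) (by omega) (by omega)]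

lemma sum_range_half_chebCTerm {n : ℕ} (hn : 1 ≤ n) :
    ∑ i ∈ range (n / 2 + 1), chebCTerm n i = ∑ i ∈ range n, chebCTerm n i := by
  refine sum_subset (range_subset_range.2 (by omega)) fun i hi hi' ↦ ?_
  simp only [mem_range] at hi hi'
  exact chebCTerm_eq_zero hi (by omega)

lemma chebCTerm_add_two_zero (n : ℕ) : chebCTerm (n + 2) 0 = X * chebCTerm (n + 1) 0 := by
  simp only [chebCTerm, chebK_zero_right, pow_zero, one_mul, Nat.sub_zero, mul_zero, pow_succ]
  ring

lemma chebCTerm_add_two_succ {n i : ℕ} (hi : i < n) :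
    chebCTerm (n + 2) (i + 1) = X * chebCTerm (n + 1) (i + 1) - chebCTerm n i := by
  obtain ⟨m, hm⟩ : ∃ m, n - i = m + 1 := ⟨n - i - 1, by omega⟩
  have hX : X * chebCTerm (n + 1) (i + 1)
      = C ((-1 : ℤ) ^ (i + 1) * (chebK (m + 1) (i + 1) : ℤ)) * X ^ (n - 2 * i) := by
    rcases lt_or_ge (2 * i) n with h | h
    · rw [chebCTerm, show n + 1 - (i + 1) = m + 1 by omega,
        show n - 2 * i = n + 1 - 2 * (i + 1) + 1 by omega, pow_succ]
      ring
    -- the exponent `n + 1 - 2 * (i + 1)` is truncated here, but the coefficient vanishes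
    · rw [chebCTerm_eq_zero (by omega) (by omega), chebK_eq_zero_of_lt (by omega) (by omega)]
      simp
  rw [hX, chebCTerm, chebCTerm, show n + 2 - (i + 1) = m + 2 by omega,
    show n + 2 - 2 * (i + 1) = n - 2 * i by omega, hm, chebK_add_two_succ, ← sub_mul, ← C_sub]
  congr 2
  push_cast
  ring

lemma sum_range_chebCTerm_add_two {n : ℕ} (hn : 1 ≤ n) :
    ∑ i ∈ range (n + 2), chebCTerm (n + 2) i
      = X * ∑ i ∈ range (n + 1), chebCTerm (n + 1) i - ∑ i ∈ range n, chebCTerm n i := by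
  rw [sum_range_succ', sum_range_succ, sum_range_succ',
    chebCTerm_eq_zero (i := n + 1) (by omega) (by omega), chebCTerm_add_two_zero,
    sum_congr rfl fun i hi ↦ chebCTerm_add_two_succ (mem_range.1 hi), sum_sub_distrib,
    mul_add, mul_sum]
  abel

lemma chebC_eq_sum_range {n : ℕ} (hn : 1 ≤ n) : chebC n = ∑ i ∈ range n, chebCTerm n i := by
  induction n using Nat.twoStepInduction with
  | zero => omega
  | one => simp [chebC, chebCTerm, chebK]
  | more n ih₁ ih₂ =>
    rcases Nat.eq_zero_or_pos n with rfl | hn₀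
    · norm_num [chebC, chebCTerm, chebK, sum_range_succ, sq, sub_eq_add_neg]
    · rw [chebC, ih₂ (by omega), ih₁ hn₀, sum_range_chebCTerm_add_two hn₀]

/-- `C_n(x) = Σ_{i ≤ n/2} (−1)^i · K(n−i, i) · x^{n−2i}` for `n ≥ 1`. -/
theorem chebC_eq_sum (n : ℕ) (hn : 1 ≤ n) :
    chebC n
      = ∑ i ∈ Finset.range (n / 2 + 1),
          Polynomial.C ((-1 : ℤ) ^ i * (chebK (n - i) i : ℤ)) * X ^ (n - 2 * i) :=
  (chebC_eq_sum_range hn).trans (sum_range_half_chebCTerm hn).symm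
end

section
/- For every natural number n, (x² − 4)·S_n(x)² = C_{2n}(x) − 2 as polynomials over ℤ (i.e., C_{2n}(x) − 2 factors as (x²−4) times a perfect square). -/
open Polynomial

/-!
Writing `C_n = 2 S_{n+1} - X S_n`, the identity `S_{n+1}² - X S_{n+1} S_n + S_n² = 1` becomes the
Pell equation `C_n² - (X² - 4) S_n² = 4`, while the product formula `C_m C_k = C_{m+k} + C_{m-k}`
gives `C_n² = C_{2n} + 2`. Subtracting the two yields the claim.
-/

namespace Polynomial.Chebyshev

variable (R : Type*) [CommRing R]

/-- Mathlib's `S R` is shifted by one from `chebS`: `S R (n - 1)` corresponds to `S_n`. -/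
theorem C_sq_sub_X_sq_sub_four_mul_S_sq (n : ℤ) :
    C R n ^ 2 - (X ^ 2 - 4) * S R (n - 1) ^ 2 = 4 := by
  have pell := S_sq_add_S_sq R (n - 1)
  rw [sub_add_cancel] at pell
  rw [C_eq_S_sub_X_mul_S]
  linear_combination 4 * pell

theorem C_two_mul (n : ℤ) : C R (2 * n) = C R n ^ 2 - 2 := by
  have h := C_mul_C R n n
  rw [sub_self, C_zero, ← two_mul] at h
  linear_combination -h

theorem X_sq_sub_four_mul_S_sq (n : ℤ) :
    (X ^ 2 - 4) * S R (n - 1) ^ 2 = C R (2 * n) - 2 := by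
  linear_combination -C_two_mul R n - C_sq_sub_X_sq_sub_four_mul_S_sq R n

end Polynomial.Chebyshev

theorem chebC_eq_C (n : ℕ) : chebC n = Chebyshev.C ℤ n := by
  induction n using Nat.twoStepInduction with
  | zero => simp [chebC]
  | one => simp [chebC]
  | more n ih₀ ih₁ =>
    rw [chebC, ih₀, ih₁]
    push_cast
    exact (Chebyshev.C_add_two ℤ n).symm

theorem chebS_eq_S (n : ℕ) : chebS n = Chebyshev.S ℤ (n - 1) := by
  induction n using Nat.twoStepInduction with
  | zero => simp [chebS]
  | one => simp [chebS]
  | more n ih₀ ih₁ =>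
    rw [chebS, ih₀, ih₁]
    push_cast
    linear_combination (norm := ring_nf) -(Chebyshev.S_add_two ℤ (n - 1))

/-- `(x² − 4)·S_n² = C_{2n} − 2`. -/
theorem chebC_two_mul_sub_two (n : ℕ) :
    (X ^ 2 - 4) * chebS n ^ 2 = chebC (2 * n) - 2 := by
  rw [chebS_eq_S, chebC_eq_C]
  push_cast
  exact Chebyshev.X_sq_sub_four_mul_S_sq ℤ n
end

section
/- For every natural number n ≥ 1, S_n(x) − S_n(y) = (x − y)·Σ_{i=1}^{n−1} S_i(x)·S_{n−i}(y), as an identity in ℤ[x,y]. -/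
/-!
Both `d n = S_n(x) - S_n(y)` and `(x - y) c n`, where `c n = ∑_{i < n} S_i(x) S_{n-i}(y)`, satisfy
`d (n+2) = y d (n+1) - d n + (x - y) S_{n+1}(x)` with `d 0 = d 1 = 0`: for the convolution this comes
from expanding `S_{n+2-i}(y)` by the recurrence, the last term being `S_{n+1}(x) S_1(y)`.
The term `i = 0` of `c n` vanishes because `S_0 = 0`.
-/

open Polynomial

section
variable {R : Type*} [CommRing R] [Algebra ℤ R]

@[simp]
lemma aeval_chebS_zero (t : R) : aeval t (chebS 0) = 0 := by simp [chebS]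

@[simp]
lemma aeval_chebS_one (t : R) : aeval t (chebS 1) = 1 := by simp [chebS]

lemma aeval_chebS_add_two (t : R) (n : ℕ) :
    aeval t (chebS (n + 2)) = t * aeval t (chebS (n + 1)) - aeval t (chebS n) := by
  simp [chebS]

lemma sum_mul_aeval_chebS_add_two (y : R) (a : ℕ → R) (n : ℕ) :
    ∑ i ∈ Finset.range (n + 2), a i * aeval y (chebS (n + 2 - i)) =
      y * ∑ i ∈ Finset.range (n + 1), a i * aeval y (chebS (n + 1 - i))
        - ∑ i ∈ Finset.range n, a i * aeval y (chebS (n - i)) + a (n + 1) := by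
  have hterm : ∀ i ∈ Finset.range (n + 1), a i * aeval y (chebS (n + 2 - i)) =
      y * (a i * aeval y (chebS (n + 1 - i))) - a i * aeval y (chebS (n - i)) := by
    intro i hi
    rw [Finset.mem_range] at hi
    rw [show n + 2 - i = n - i + 2 by omega, show n + 1 - i = n - i + 1 by omega,
      aeval_chebS_add_two]
    ring
  rw [Finset.sum_range_succ, Finset.sum_congr rfl hterm, Finset.sum_sub_distrib,
    ← Finset.mul_sum, Finset.sum_range_succ (fun i => a i * aeval y (chebS (n - i))) n]
  simp

theorem aeval_chebS_sub_aeval_chebS (x y : R) (n : ℕ) :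
    aeval x (chebS n) - aeval y (chebS n) =
      (x - y) * ∑ i ∈ Finset.range n, aeval x (chebS i) * aeval y (chebS (n - i)) := by
  induction n using Nat.twoStepInduction with
  | zero => simp
  | one => simp
  | more n ih ih₁ =>
    rw [sum_mul_aeval_chebS_add_two, aeval_chebS_add_two x, aeval_chebS_add_two y]
    linear_combination y * ih₁ - ih

end

lemma sum_range_eq_sum_Icc_of_apply_zero_eq_zero {M : Type*} [AddCommMonoid M] {f : ℕ → M}
    (h : f 0 = 0) (n : ℕ) :
    ∑ i ∈ Finset.range n, f i = ∑ i ∈ Finset.Icc 1 (n - 1), f i := by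
  cases n with
  | zero => simp
  | succ m =>
    rw [Finset.range_eq_Ico, Finset.sum_eq_sum_Ico_succ_bot m.succ_pos, h, zero_add, zero_add,
      Nat.succ_eq_add_one, Finset.Ico_add_one_right_eq_Icc, Nat.add_sub_cancel]

open MvPolynomial in
theorem chebS_sub_factor_general (n : ℕ) :
    (Polynomial.aeval (MvPolynomial.X 0 : MvPolynomial (Fin 2) ℤ) (chebS n))
        - Polynomial.aeval (MvPolynomial.X 1 : MvPolynomial (Fin 2) ℤ) (chebS n)
      = (MvPolynomial.X 0 - MvPolynomial.X 1)
          * ∑ i ∈ Finset.Icc 1 (n - 1),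
              (Polynomial.aeval (MvPolynomial.X 0 : MvPolynomial (Fin 2) ℤ) (chebS i))
                * Polynomial.aeval (MvPolynomial.X 1 : MvPolynomial (Fin 2) ℤ) (chebS (n - i)) := by
  rw [aeval_chebS_sub_aeval_chebS, sum_range_eq_sum_Icc_of_apply_zero_eq_zero (by simp)]

open MvPolynomial in
/-- `S_n(x) − S_n(y) = (x − y)·Σ_{i=1}^{n−1} S_i(x)·S_{n−i}(y)` in `ℤ[x,y]`. -/
theorem chebS_sub_factor (n : ℕ) (hn : 1 ≤ n) :
    (Polynomial.aeval (MvPolynomial.X 0 : MvPolynomial (Fin 2) ℤ) (chebS n))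
        - Polynomial.aeval (MvPolynomial.X 1 : MvPolynomial (Fin 2) ℤ) (chebS n)
      = (MvPolynomial.X 0 - MvPolynomial.X 1)
          * ∑ i ∈ Finset.Icc 1 (n - 1),
              (Polynomial.aeval (MvPolynomial.X 0 : MvPolynomial (Fin 2) ℤ) (chebS i))
                * Polynomial.aeval (MvPolynomial.X 1 : MvPolynomial (Fin 2) ℤ) (chebS (n - i)) :=
  chebS_sub_factor_general n
end

section
/- If n = 2^m is a power of two with m ≥ 1, then the polynomial C_n(x) ∈ ℤ[x] is irreducible over ℚ. -/
open Polynomial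

/-!
Since `C_{2k} = C_k² - 2`, reducing modulo 2 gives `C_{2^m} ≡ X^{2^m}`, while the constant term
is `C_{2^m}(0) = ±2` for `m ≥ 1` (from `C_n(2x) = 2 T_n(x)`). So the monic polynomial `C_{2^m}` is
Eisenstein at 2, hence irreducible over `ℤ` and, by Gauss's lemma, over `ℚ`.
-/

theorem chebC_eq_chebyshev_C : ∀ n : ℕ, chebC n = Chebyshev.C ℤ n
  | 0 => by rw [chebC, Nat.cast_zero, Chebyshev.C_zero]
  | 1 => by rw [chebC, Nat.cast_one, Chebyshev.C_one]
  | n + 2 => by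
    rw [chebC, chebC_eq_chebyshev_C n, chebC_eq_chebyshev_C (n + 1)]
    exact_mod_cast (Chebyshev.C_add_two ℤ n).symm

theorem chebC_two_mul (k : ℕ) : chebC (2 * k) = chebC k ^ 2 - 2 := by
  rw [chebC_eq_chebyshev_C, chebC_eq_chebyshev_C, Nat.cast_mul, Chebyshev.C_mul, Nat.cast_ofNat,
    Chebyshev.C_two, sub_comp, pow_comp, X_comp, ofNat_comp]
  norm_num

theorem chebC_eval_zero_two_mul (k : ℕ) : (chebC (2 * k)).eval 0 = 2 * (-1) ^ k := by
  have h := congr_arg (eval 0) (Chebyshev.C_comp_two_mul_X ℤ (2 * k))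
  simp only [eval_comp, eval_mul, eval_X, mul_zero, eval_ofNat, Chebyshev.T_eval_two_mul_zero] at h
  rw [chebC_eq_chebyshev_C, Nat.cast_mul, Nat.cast_ofNat, h, Int.cast_negOnePow_natCast]

theorem degree_chebC : ∀ n, (chebC n).degree = n
  | 0 => by rw [chebC, ← C_ofNat, degree_C two_ne_zero]; rfl
  | 1 => by rw [chebC, degree_X]; rfl
  | n + 2 => by
    have hlead : (X * chebC (n + 1)).degree = ↑(n + 2) := by
      rw [mul_comm, degree_mul_X, degree_chebC (n + 1)]; norm_cast
    have hlt : (chebC n).degree < (X * chebC (n + 1)).degree := by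
      rw [hlead, degree_chebC n]; exact_mod_cast by omega
    rw [chebC, degree_sub_eq_left_of_degree_lt hlt, hlead]

theorem natDegree_chebC (n : ℕ) : (chebC n).natDegree = n :=
  natDegree_eq_of_degree_eq_some (degree_chebC n)

theorem monic_chebC : ∀ {n}, n ≠ 0 → (chebC n).Monic
  | 1, _ => monic_X
  | n + 2, _ => by
    rw [chebC]
    refine (monic_X.mul (monic_chebC n.succ_ne_zero)).sub_of_left ?_
    rw [degree_chebC, mul_comm, degree_mul_X, degree_chebC]
    exact_mod_cast by omega

theorem map_chebC_two_pow {R : Type*} [CommRing R] (φ : ℤ →+* R) (h2 : (2 : R) = 0) (m : ℕ) :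
    (chebC (2 ^ m)).map φ = X ^ 2 ^ m := by
  induction m with
  | zero => rw [pow_zero, pow_one, chebC, map_X]
  | succ m ih =>
    rw [pow_succ', chebC_two_mul, Polynomial.map_sub, Polynomial.map_pow, ih,
      Polynomial.map_ofNat, ← C_ofNat, h2, C_0, sub_zero, ← pow_mul, mul_comm]

theorem Polynomial.Monic.isEisensteinAt_of_map_eq_X_pow {R : Type*} [CommRing R] {P : Ideal R}
    {f : R[X]} (hf : f.Monic) (hP : P ≠ ⊤) (hmod : f.map (Ideal.Quotient.mk P) = X ^ f.natDegree)
    (h0 : f.coeff 0 ∉ P ^ 2) : f.IsEisensteinAt P := by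
  refine hf.isEisensteinAt_of_mem_of_notMem hP (fun {n} hn => ?_) h0
  have h := congr_arg (coeff · n) hmod
  simp only [coeff_map, coeff_X_pow, if_neg hn.ne] at h
  exact Ideal.Quotient.eq_zero_iff_mem.mp h

/-- `C_{2^m}` is irreducible over `ℚ` for `m ≥ 1`. -/
theorem chebC_pow_two_irreducible (m : ℕ) (hm : 1 ≤ m) :
    Irreducible ((chebC (2 ^ m)).map (Int.castRingHom ℚ)) := by
  have hmon : (chebC (2 ^ m)).Monic := monic_chebC (by positivity)
  have hprime : (Ideal.span {(2 : ℤ)}).IsPrime :=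
    (Ideal.span_singleton_prime two_ne_zero).mpr Int.prime_two
  have hmod : (chebC (2 ^ m)).map (Ideal.Quotient.mk (Ideal.span {2})) = X ^ 2 ^ m :=
    map_chebC_two_pow _ (by
      rw [← map_ofNat (Ideal.Quotient.mk _) 2, Ideal.Quotient.eq_zero_iff_mem]
      exact Ideal.mem_span_singleton_self 2) m
  have hcoeff : (chebC (2 ^ m)).coeff 0 ∉ Ideal.span {(2 : ℤ)} ^ 2 := by
    obtain ⟨k, rfl⟩ := Nat.exists_eq_add_of_le' hm
    rw [coeff_zero_eq_eval_zero, pow_succ' (2 : ℕ), chebC_eval_zero_two_mul,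
      Ideal.span_singleton_pow, Ideal.mem_span_singleton]
    rcases neg_one_pow_eq_or ℤ (2 ^ k) with h | h <;> rw [h] <;> decide
  have heis := hmon.isEisensteinAt_of_map_eq_X_pow hprime.ne_top
    (by rwa [natDegree_chebC]) hcoeff
  have hirr := heis.irreducible hprime hmon.isPrimitive (by rw [natDegree_chebC]; positivity)
  rw [← algebraMap_int_eq]
  exact hmon.irreducible_iff_irreducible_map_fraction_map.mp hirr
end
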